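/- For every natural number k ≥ 1, the intertwining identity H_k · D_k = D_k · (H_{k−1} − I) holds, where I is the k×k identity matrix. (This is the finite-dimensional form of the commutation relation [H, d†] = −d† for the dimer hopping Hamiltonian and the creation operator d† = (a₂† − a₃†)/√2.) -/
import Mathlib


open Matrix

lemma sum_ite_coe {n m : ℕ} (f : Fin n → ℝ) :
    (∑ γ : Fin n, if (γ:ℕ) = m then f γ else 0) = if h : m < n then f ⟨m, h⟩ else 0 := by
  split
  · rename_i h
    rw [Finset.sum_eq_single_of_mem ⟨m, h⟩ (Finset.mem_univ _)]
    · simp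
    · intro γ _ hγ
      rw [if_neg (fun hc => hγ (Fin.ext hc))]
  · apply Finset.sum_eq_zero
    intro γ _
    rw [if_neg]
    have := γ.isLt
    omega

lemma sum_ite_coe' {n m : ℕ} (f : Fin n → ℝ) :
    (∑ γ : Fin n, if (γ:ℕ) + 1 = m then f γ else 0)
      = if h : m - 1 < n ∧ 1 ≤ m then f ⟨m - 1, h.1⟩ else 0 := by
  split
  · rename_i h
    rw [Finset.sum_eq_single_of_mem ⟨m-1, h.1⟩ (Finset.mem_univ _)]
    · rw [if_pos (by simp only [Fin.val_mk]; omega)]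
    · intro γ _ hγ
      rw [if_neg]
      intro hc
      exact hγ (Fin.ext (by simp only [Fin.val_mk]; omega))
  · apply Finset.sum_eq_zero
    intro γ _
    rw [if_neg]
    have := γ.isLt
    omega

lemma sqrt_combine {x1 x2 y1 y2 : ℝ} (h1 : 0 ≤ x2) (h2 : 0 ≤ y2) (h : x1*x2 = y1*y2) :
    Real.sqrt x1 * Real.sqrt x2 = Real.sqrt y1 * Real.sqrt y2 := by
  rw [← Real.sqrt_mul' _ h1, ← Real.sqrt_mul' _ h2, h]

lemma sqrt_mul_sqrt_half (x y : ℝ) (hx : 0 ≤ x) (hy : 0 ≤ y) :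
    Real.sqrt (x*y) * Real.sqrt (x/2) = x * Real.sqrt (y/2) := by
  rw [← Real.sqrt_mul (by positivity), show x*y*(x/2) = (x*x)*(y/2) by ring,
    Real.sqrt_mul (by positivity), Real.sqrt_mul_self hx]

lemma sqrt_half_mul (x y : ℝ) (hx : 0 ≤ x) (hy : 0 ≤ y) :
    Real.sqrt (x/2) * Real.sqrt (x*y) = x * Real.sqrt (y/2) := by
  rw [mul_comm]; exact sqrt_mul_sqrt_half x y hx hy


/-- The dimer hopping matrix `H_k` restricted to the `k`-particle subspace:
a `(k+1) × (k+1)` symmetric tridiagonal matrix with off-diagonal entries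
`√((α+1)(k−α))`. -/
noncomputable def hopH (k : ℕ) : Matrix (Fin (k+1)) (Fin (k+1)) ℝ :=
  fun α β =>
    if (α : ℕ) + 1 = (β : ℕ) then Real.sqrt ((((α : ℕ) + 1) * (k - (α : ℕ)) : ℕ))
    else if (β : ℕ) + 1 = (α : ℕ) then Real.sqrt ((((β : ℕ) + 1) * (k - (β : ℕ)) : ℕ))
    else 0

/-- The `(k+1) × k` creation matrix `D_k` (for `d† = (a₂† − a₃†)/√2`), with entries
`D_k[β,β] = −√((k−β)/2)`, `D_k[β+1,β] = √((β+1)/2)`, and `0` otherwise. -/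
noncomputable def Dmat (k : ℕ) : Matrix (Fin (k+1)) (Fin k) ℝ :=
  fun α β =>
    if (α : ℕ) = (β : ℕ) then -Real.sqrt (((k : ℝ) - (β : ℕ)) / 2)
    else if (α : ℕ) = (β : ℕ) + 1 then Real.sqrt ((((β : ℕ) : ℝ) + 1) / 2)
    else 0

/-- For every `k ≥ 1` (written here as `k+1`), the intertwining identity
`H_{k+1} · D_{k+1} = D_{k+1} · (H_k − I)` holds: the finite-dimensional form of
the commutation relation `[H, d†] = −d†`. -/
theorem hopH_mul_Dmat (k : ℕ) :
    hopH (k+1) * Dmat (k+1) = Dmat (k+1) * (hopH k - 1) := by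
  ext α β
  rw [Matrix.mul_apply, Matrix.mul_apply]
  have hD : ∀ γ : Fin (k+2), Dmat (k+1) γ β
      = (if γ = β.castSucc then -Real.sqrt (((k:ℝ) + 1 - (β:ℕ)) / 2) else 0)
      + (if γ = β.succ then Real.sqrt ((((β:ℕ):ℝ) + 1) / 2) else 0) := by
    intro γ
    simp only [Dmat, Fin.ext_iff, Fin.coe_castSucc, Fin.val_succ]
    split_ifs <;> first | omega | (push_cast; ring)
  have hD' : ∀ γ : Fin (k+1), Dmat (k+1) α γ
      = (if (γ:ℕ) = (α:ℕ) then -Real.sqrt (((k:ℝ) + 1 - (γ:ℕ)) / 2) else 0)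
      + (if (γ:ℕ) + 1 = (α:ℕ) then Real.sqrt ((((γ:ℕ):ℝ) + 1) / 2) else 0) := by
    intro γ
    simp only [Dmat]
    split_ifs <;> first | omega | (push_cast; ring)
  simp only [hD, mul_add, mul_ite, mul_zero]
  rw [Finset.sum_add_distrib]
  simp only [Finset.sum_ite_eq', Finset.mem_univ, if_true]
  simp only [hD', add_mul, ite_mul, zero_mul]
  rw [Finset.sum_add_distrib, sum_ite_coe, sum_ite_coe']
  simp only [hopH, Matrix.sub_apply, Matrix.one_apply, Fin.coe_castSucc, Fin.val_succ,
    Fin.val_mk, Fin.ext_iff]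
  clear hD hD'
  have ha : (α:ℕ) < k + 2 := α.isLt
  have hb : (β:ℕ) < k + 1 := β.isLt
  generalize (α:ℕ) = a at ha ⊢
  generalize (β:ℕ) = b at hb ⊢
  have hsq := @sqrt_mul_sqrt_half
  split_ifs
  all_goals try (exfalso; omega)
  -- G1 : b = a+1, a ≥ 1
  · have h1 : b = a + 1 := by omega
    subst h1
    obtain ⟨c, hc, rfl⟩ : ∃ c, 1 ≤ c ∧ k = a + c := ⟨k - a, by omega, by omega⟩
    simp only [sub_zero, mul_zero, zero_mul, add_zero, sub_self]
    rw [show a + c + 1 - a = c + 1 from by omega, show a + c - a = c from by omega]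
    push_cast
    rw [mul_neg, neg_mul, neg_inj]
    have h0 : (0:ℝ) ≤ (c:ℝ) := Nat.cast_nonneg c
    exact sqrt_combine (by linarith) (by positivity) (by ring)
  -- G2 : b = a+1, a = 0
  · have h0 : a = 0 := by omega
    subst h0
    have h1 : b = 1 := by omega
    subst h1
    simp only [Nat.sub_zero, sub_zero, mul_zero, zero_mul, add_zero]
    push_cast
    rw [mul_neg, neg_mul, neg_inj]
    have h2 : (0:ℝ) ≤ (k:ℝ) := Nat.cast_nonneg k
    exact sqrt_combine (by linarith) (by positivity) (by ring)
  -- G3 : a = b+1, b+1 ≤ k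
  · have h1 : a = b + 1 := by omega
    subst h1
    obtain ⟨c, hc, rfl⟩ : ∃ c, 1 ≤ c ∧ k = b + c := ⟨k - b, by omega, by omega⟩
    simp only [sub_zero, mul_zero, zero_mul, add_zero, zero_sub, mul_neg, mul_one]
    rw [show b + 1 - 1 = b from rfl, show b + c + 1 - b = c + 1 from by omega,
        show b + c - b = c from by omega]
    push_cast
    rw [show ((b:ℝ)+(c:ℝ)+1-(b:ℝ))/2 = ((c:ℝ)+1)/2 from by ring,
        show ((b:ℝ)+(c:ℝ)+1-((b:ℝ)+1))/2 = (c:ℝ)/2 from by ring,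
        show ((b:ℝ)+1)*((c:ℝ)+1) = ((c:ℝ)+1)*((b:ℝ)+1) from by ring,
        show ((b:ℝ)+1)*(c:ℝ) = (c:ℝ)*((b:ℝ)+1) from by ring,
        sqrt_mul_sqrt_half _ _ (by positivity) (by positivity),
        neg_mul, sqrt_half_mul _ _ (by positivity) (by positivity)]
    ring
  -- G4 : a = b+1, a = k+1
  · have h2 : a = k + 1 := by omega
    subst h2
    have h1 : b = k := by omega
    subst h1
    rw [show b + 1 - b = 1 from by omega, show b + 1 - 1 = b from rfl]
    simp only [add_zero, zero_add, zero_sub, mul_one]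
    push_cast
    rw [zero_mul, add_zero, show ((b:ℝ)+1-(b:ℝ))/2 = 1/2 from by ring,
        show Real.sqrt ((b:ℝ)+1) = Real.sqrt (1*((b:ℝ)+1)) from by rw [one_mul],
        mul_neg, sqrt_mul_sqrt_half 1 ((b:ℝ)+1) (by norm_num) (by positivity)]
    ring
  -- G5 : a = b, a ≥ 1
  · have h1 : a = b := by omega
    subst h1
    obtain ⟨a', rfl⟩ : ∃ a', a = a' + 1 := ⟨a - 1, by omega⟩
    obtain ⟨c, hc, rfl⟩ : ∃ c, 1 ≤ c ∧ k = a' + c := ⟨k - a', by omega, by omega⟩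
    simp only [sub_zero, mul_zero, zero_mul, add_zero, zero_sub, mul_neg, mul_one, neg_neg]
    rw [show a' + 1 - 1 = a' from rfl, show a' + c + 1 - (a' + 1) = c from by omega,
        show a' + c - a' = c from by omega]
    push_cast
    rw [show ((a':ℝ)+(c:ℝ)+1-((a':ℝ)+1))/2 = (c:ℝ)/2 from by ring,
        sqrt_mul_sqrt_half ((a':ℝ)+1+1) (c:ℝ) (by positivity) (by positivity),
        sqrt_half_mul ((a':ℝ)+1) (c:ℝ) (by positivity) (by positivity)]
    ring
  -- G6 : a = b = 0
  · have h1 : a = 0 := by omega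
    subst h1
    have h2 : b = 0 := by omega
    subst h2
    simp only [Nat.sub_zero, zero_mul, zero_add, add_zero, zero_sub, mul_one, neg_neg]
    push_cast
    rw [show ((0:ℝ)+1)/2 = 1/2 from by norm_num,
        sqrt_mul_sqrt_half 1 ((k:ℝ)+1) (by norm_num) (by positivity),
        show ((k:ℝ)+1-0) = (k:ℝ)+1 from by ring]
    ring
  -- G7 : a = b+2, a ≤ k
  · have h1 : a = b + 2 := by omega
    subst h1
    obtain ⟨c, hc, rfl⟩ : ∃ c, 1 ≤ c ∧ k = b + c := ⟨k - b, by omega, by omega⟩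
    simp only [sub_zero, mul_zero, zero_mul, add_zero, zero_add]
    rw [show b + 2 - 1 = b + 1 from rfl, show b + c + 1 - (b + 1) = c from by omega,
        show b + c - b = c from by omega]
    push_cast
    exact sqrt_combine (by positivity) (by positivity) (by ring)
  -- G8 : a = b+2, a = k+1
  · have h1 : a = b + 2 := by omega
    subst h1
    have h2 : k = b + 1 := by omega
    subst h2
    rw [show b + 2 - 1 = b + 1 from rfl, show b + 1 + 1 - (b + 1) = 1 from by omega,
        show b + 1 - b = 1 from by omega]
    simp only [zero_mul, zero_add, add_zero, sub_zero]
    push_cast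
    exact sqrt_combine (by positivity) (by positivity) (by ring)
  · ring
  · ring
  · ring
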